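/- arXiv:2209.02001 — 4 statements merged into one kernel-verified Lean document; each statement's English description precedes it below -/
import Mathlib

section
/- Let $\mu$ be a probability measure on a measurable space $\Omega$, and let $S, W, T$ be disjoint measurable sets with $\mu(S) > 0$. Let $(\vartheta_k)_{k \ge 0}$ be a Markov chain with stationary (invariant) distribution $\mu$, initialised from the conditional distribution $\mu(\cdot \mid S)$. Suppose every path from $S$ to $T$ must pass through $W$ in the sense that $\tau_T \ge \tau_W$ almost surely, where $\tau_A = \inf\{k : \vartheta_k \in A\}$. Then for every $K \ge 1$, $\Pr(\tau_W \le K) \le K \,\mu(W)/\mu(S)$. -/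
/-!
By invariance of `μ`, domination of a law by a multiple of `μ` is preserved by a step of the
chain. The initial law `μ(·|S)` is at most `μ(S)⁻¹ • μ`, so every `ϑ_k` hits `W` with
probability at most `μ(W)/μ(S)`; since `ϑ_0 ∈ S` misses `W`, a union bound over `1 ≤ k ≤ K`
gives the claim.
-/

open MeasureTheory ProbabilityTheory

namespace MeasureTheory.Measure

variable {α β : Type*} [MeasurableSpace α] [MeasurableSpace β]

lemma comp_mono {ν ν' : Measure α} (h : ν ≤ ν') (κ : Kernel α β) : κ ∘ₘ ν ≤ κ ∘ₘ ν' :=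
  le_iff.mpr fun s hs => by
    rw [bind_apply hs κ.aemeasurable, bind_apply hs κ.aemeasurable]
    exact lintegral_mono' h le_rfl

lemma comp_le_smul_of_le_smul {μ ν : Measure α} {κ : Kernel α α} (hinv : κ ∘ₘ μ = μ)
    {c : ENNReal} (h : ν ≤ c • μ) : κ ∘ₘ ν ≤ c • μ :=
  (comp_mono h κ).trans_eq (by rw [comp_smul, hinv])

lemma le_smul_of_comp_invariant {μ : Measure α} {ν : ℕ → Measure α} {κ : Kernel α α}
    (hinv : κ ∘ₘ μ = μ) {c : ENNReal} (h0 : ν 0 ≤ c • μ) (hstep : ∀ k, ν (k + 1) = κ ∘ₘ ν k) :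
    ∀ k, ν k ≤ c • μ
  | 0 => h0
  | k + 1 => hstep k ▸ comp_le_smul_of_le_smul hinv (le_smul_of_comp_invariant hinv h0 hstep k)

end MeasureTheory.Measure

namespace ProbabilityTheory

variable {α : Type*} [MeasurableSpace α]

lemma cond_le_inv_smul (μ : Measure α) (s : Set α) : μ[|s] ≤ (μ s)⁻¹ • μ :=
  fun t => mul_le_mul_right (Measure.restrict_le_self t) _

lemma cond_apply_eq_zero_of_disjoint {μ : Measure α} {s t : Set α} (ht : MeasurableSet t)
    (hst : Disjoint s t) : μ[t|s] = 0 := by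
  rw [cond_apply' ht, hst.inter_eq, measure_empty, mul_zero]

end ProbabilityTheory

lemma MeasureTheory.measure_exists_le_mem_le {Ω : Type*} [MeasurableSpace Ω] {P : Measure Ω}
    {A : ℕ → Set Ω} (h0 : P (A 0) = 0) {c : ENNReal} (hle : ∀ k, P (A (k + 1)) ≤ c) :
    ∀ K : ℕ, P {ω | ∃ k ≤ K, ω ∈ A k} ≤ K * c
  | 0 => by simpa using h0.le
  | K + 1 => by
    have hsub : {ω | ∃ k ≤ K + 1, ω ∈ A k} ⊆ {ω | ∃ k ≤ K, ω ∈ A k} ∪ A (K + 1) := by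
      rintro ω ⟨k, hk, hω⟩
      rcases Nat.le_succ_iff.mp hk with hk | rfl
      exacts [Or.inl ⟨k, hk, hω⟩, Or.inr hω]
    calc P {ω | ∃ k ≤ K + 1, ω ∈ A k}
        ≤ P {ω | ∃ k ≤ K, ω ∈ A k} + P (A (K + 1)) :=
          (measure_mono hsub).trans (measure_union_le _ _)
      _ ≤ K * c + c := add_le_add (measure_exists_le_mem_le h0 hle K) (hle K)
      _ = (K + 1 : ℕ) * c := by push_cast; ring

theorem stmt_0_general {E Ω : Type*} [MeasurableSpace E] [MeasurableSpace Ω]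
    (μ : Measure E)
    (S W : Set E) (hWm : MeasurableSet W)
    (hSW : Disjoint S W)
    (P : Measure Ω)
    (ϑ : ℕ → Ω → E) (hϑ : ∀ k, Measurable (ϑ k))
    (κ : Kernel E E)
    (hinv : μ.bind (fun x => κ x) = μ)
    (hinit : Measure.map (ϑ 0) P = ProbabilityTheory.cond μ S)
    (hstep : ∀ k, Measure.map (ϑ (k + 1)) P = (Measure.map (ϑ k) P).bind (fun x => κ x))
    (K : ℕ) :
    P {ω | ∃ k ≤ K, ϑ k ω ∈ W} ≤ K * μ W / μ S := by
  have hlaw : ∀ k, P.map (ϑ k) ≤ (μ S)⁻¹ • μ :=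
    Measure.le_smul_of_comp_invariant hinv (hinit ▸ cond_le_inv_smul μ S) hstep
  have h0 : P (ϑ 0 ⁻¹' W) = 0 := by
    rw [← Measure.map_apply (hϑ 0) hWm, hinit, cond_apply_eq_zero_of_disjoint hWm hSW]
  have hle : ∀ k, P (ϑ (k + 1) ⁻¹' W) ≤ (μ S)⁻¹ * μ W := fun k => by
    rw [← Measure.map_apply (hϑ _) hWm]
    exact hlaw (k + 1) W
  calc P {ω | ∃ k ≤ K, ϑ k ω ∈ W} ≤ K * ((μ S)⁻¹ * μ W) := measure_exists_le_mem_le h0 hle K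
    _ = K * μ W / μ S := by rw [div_eq_mul_inv]; ring

/-- Bottleneck hitting-time bound: for a Markov chain with invariant distribution `μ`,
started from `μ(·|S)`, whose paths from `S` to `T` must pass through `W`
(`τ_T ≥ τ_W` a.s.), the hitting time of `W` satisfies `Pr(τ_W ≤ K) ≤ K μ(W)/μ(S)`.
The event `{τ_W ≤ K}` is `{∃ k ≤ K, ϑ_k ∈ W}`. -/
theorem stmt_0 {E Ω : Type*} [MeasurableSpace E] [MeasurableSpace Ω]
    (μ : Measure E) [IsProbabilityMeasure μ]
    (S W T : Set E) (hSm : MeasurableSet S) (hWm : MeasurableSet W) (hTm : MeasurableSet T)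
    (hSW : Disjoint S W) (hST : Disjoint S T) (hWT : Disjoint W T)
    (hμS : 0 < μ S)
    (P : Measure Ω) [IsProbabilityMeasure P]
    (ϑ : ℕ → Ω → E) (hϑ : ∀ k, Measurable (ϑ k))
    (κ : Kernel E E) [IsMarkovKernel κ]
    (hinv : μ.bind (fun x => κ x) = μ)
    (hinit : Measure.map (ϑ 0) P = ProbabilityTheory.cond μ S)
    (hstep : ∀ k, Measure.map (ϑ (k + 1)) P = (Measure.map (ϑ k) P).bind (fun x => κ x))
    (hpath : ∀ᵐ ω ∂P, ∀ k, ϑ k ω ∈ T → ∃ j ≤ k, ϑ j ω ∈ W)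
    (K : ℕ) (hK : 1 ≤ K) :
    P {ω | ∃ k ≤ K, ϑ k ω ∈ W} ≤ K * μ W / μ S :=
  stmt_0_general μ S W hWm hSW P ϑ hϑ κ hinv hinit hstep K
end

section
/- Let $\Pi = \mathcal{N}(0, \mathrm{Id}_D/D)$ be the isotropic Gaussian measure on $\mathbb{R}^D$ with covariance $\mathrm{Id}_D/D$. Fix $a \in (0,1)$. Then there exists $D_0(a)$ such that for all $D \ge D_0(a)$ and all $z \in (0, 1-a)$, $-\frac{1}{D} \log \Pi(\{\theta : \|\theta\|_2 \le z\}) \ge \frac{1}{2}\left(\frac{z^2}{2} - \log z - \frac{1}{2}\right)$. -/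
/-!
Chernoff bound: for `t ≥ 0`, Markov's inequality applied to `exp (-t ‖θ‖²)` gives
`Π(‖θ‖² ≤ z²) ≤ exp (t z²) (1 + 2t/D)^{-D/2}`, and the choice `1 + 2t/D = z⁻²` turns this into
`Π(‖θ‖ ≤ z) ≤ (z exp ((1 - z²)/2))^D`. The rate `½ (z²/2 - log z - ½)` is at most the resulting
rate `(z² - 1)/2 - log z` because `log z² ≤ z² - 1`.
-/

open MeasureTheory Measure ProbabilityTheory Real

lemma isOpenPosMeasure_gaussianReal (μ : ℝ) {v : NNReal} (hv : v ≠ 0) :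
    IsOpenPosMeasure (gaussianReal μ v) :=
  (gaussianReal_absolutelyContinuous' μ hv).isOpenPosMeasure

-- For `1 + 2 t v ≤ 0` both sides are junk zeros: the integrand is not integrable and `√` of a
-- nonpositive number is `0`.
lemma integral_exp_neg_mul_sq_gaussianReal {v : NNReal} (hv : v ≠ 0) (t : ℝ) :
    ∫ x, exp (-t * x ^ 2) ∂gaussianReal 0 v = (√(1 + 2 * t * v))⁻¹ := by
  have hexp : ∀ x : ℝ, -x ^ 2 / (2 * v) + -t * x ^ 2 = -((1 + 2 * t * v) / (2 * v)) * x ^ 2 := by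
    intro x; field_simp; ring
  simp_rw [integral_gaussianReal_eq_integral_smul hv, gaussianPDFReal, smul_eq_mul, sub_zero,
    mul_assoc, ← exp_add, hexp]
  rw [integral_const_mul, integral_gaussian, ← sqrt_inv, ← sqrt_mul (by positivity), ← sqrt_inv]
  congr 1
  field_simp

lemma integral_exp_neg_mul_sum_sq_pi_gaussianReal {ι : Type*} [Fintype ι] {v : NNReal}
    (hv : v ≠ 0) (t : ℝ) :
    ∫ θ, exp (-t * ∑ i, θ i ^ 2) ∂(Measure.pi fun _ : ι => gaussianReal 0 v) =
      (√(1 + 2 * t * v))⁻¹ ^ Fintype.card ι := by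
  simp_rw [Finset.mul_sum, exp_sum]
  rw [integral_fintype_prod_eq_pow (fun x => exp (-t * x ^ 2)),
    integral_exp_neg_mul_sq_gaussianReal hv t]

lemma measureReal_sum_sq_le_le {ι : Type*} [Fintype ι] {v : NNReal} (hv : v ≠ 0) {t : ℝ}
    (ht : 0 ≤ t) (c : ℝ) :
    (Measure.pi fun _ : ι => gaussianReal 0 v).real {θ | ∑ i, θ i ^ 2 ≤ c} ≤
      exp (t * c) * (√(1 + 2 * t * v))⁻¹ ^ Fintype.card ι := by
  have hsum : Measurable fun θ : ι → ℝ => ∑ i, θ i ^ 2 := by fun_prop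
  have hint : Integrable (fun θ : ι → ℝ => exp (-t * ∑ i, θ i ^ 2))
      (Measure.pi fun _ : ι => gaussianReal 0 v) := by
    refine .of_bound (hsum.const_mul (-t)).exp.aestronglyMeasurable 1 (ae_of_all _ fun θ => ?_)
    rw [norm_of_nonneg (exp_pos _).le, exp_le_one_iff, neg_mul, neg_nonpos]
    exact mul_nonneg ht (Finset.sum_nonneg fun i _ => sq_nonneg _)
  have hchernoff := measure_le_le_exp_mul_mgf c (neg_nonpos.2 ht) hint
  rwa [mgf, integral_exp_neg_mul_sum_sq_pi_gaussianReal hv, neg_neg]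
    at hchernoff

lemma measure_sum_sq_le_pos {ι : Type*} [Fintype ι] (μ : Measure ℝ) [SigmaFinite μ]
    [IsOpenPosMeasure μ] {c : ℝ} (hc : 0 < c) :
    0 < (Measure.pi fun _ : ι => μ) {θ | ∑ i, θ i ^ 2 ≤ c} := by
  have hopen : IsOpen {θ : ι → ℝ | ∑ i, θ i ^ 2 < c} :=
    isOpen_lt (by fun_prop) continuous_const
  exact (hopen.measure_pos _ ⟨0, by simpa using hc⟩).trans_le
    (measure_mono <| Set.ofPred_subset_ofPred.2 fun _ => le_of_lt)

lemma log_measureReal_sqrt_sum_sq_le_le {D : ℕ} (hD : D ≠ 0) {z : ℝ} (hz0 : 0 < z) (hz1 : z < 1) :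
    log ((Measure.pi fun _ : Fin D => gaussianReal 0 (D : NNReal)⁻¹).real
        {θ | √(∑ i, θ i ^ 2) ≤ z}) ≤ D * ((1 - z ^ 2) / 2 + log z) := by
  have hv : (D : NNReal)⁻¹ ≠ 0 := by simpa using hD
  have hball : {θ : Fin D → ℝ | √(∑ i, θ i ^ 2) ≤ z} = {θ | ∑ i, θ i ^ 2 ≤ z ^ 2} := by
    ext θ; exact sqrt_le_left hz0.le
  have := isOpenPosMeasure_gaussianReal 0 hv
  have hpos := measure_sum_sq_le_pos (ι := Fin D) (gaussianReal 0 (D : NNReal)⁻¹) (pow_pos hz0 2)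
  -- the optimal `t`, for which `1 + 2 t / D = z⁻²`
  set t : ℝ := D * (1 - z ^ 2) / (2 * z ^ 2)
  have ht : 0 ≤ t := div_nonneg (mul_nonneg (Nat.cast_nonneg D) (by nlinarith)) (by positivity)
  have hchernoff := measureReal_sum_sq_le_le (ι := Fin D) hv ht (z ^ 2)
  have hopt : (√(1 + 2 * t * ((D : NNReal)⁻¹ : NNReal)))⁻¹ = z := by
    have : 1 + 2 * t * ((D : NNReal)⁻¹ : NNReal) = z⁻¹ ^ 2 := by
      simp only [t, NNReal.coe_inv, NNReal.coe_natCast]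
      field_simp
      ring
    rw [this, sqrt_sq (by positivity), inv_inv]
  rw [hopt, Fintype.card_fin] at hchernoff
  rw [hball]
  calc log _ ≤ log (exp (t * z ^ 2) * z ^ D) :=
        log_le_log (ENNReal.toReal_pos hpos.ne' (measure_ne_top _ _)) hchernoff
    _ = D * ((1 - z ^ 2) / 2 + log z) := by
      rw [log_mul (exp_pos _).ne' (by positivity), log_exp, log_pow]
      simp only [t]
      field_simp

lemma log_le_sq_sub_one_div_two {z : ℝ} (hz : 0 < z) : log z ≤ (z ^ 2 - 1) / 2 := by
  have := log_le_sub_one_of_pos (pow_pos hz 2)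
  rw [log_pow] at this
  push_cast at this
  linarith

/-- Small-ball lower bound for the isotropic Gaussian `N(0, Id_D/D)`: for `a ∈ (0,1)`
there is `D₀(a)` such that for all `D ≥ D₀` and `z ∈ (0, 1-a)`,
`-(1/D) log Π(‖θ‖₂ ≤ z) ≥ ½(z²/2 - log z - ½)`. -/
theorem stmt_1 (a : ℝ) (ha : a ∈ Set.Ioo (0 : ℝ) 1) :
    ∃ D0 : ℕ, ∀ D : ℕ, D0 ≤ D → ∀ z ∈ Set.Ioo (0 : ℝ) (1 - a),
      (1 / 2) * (z ^ 2 / 2 - Real.log z - 1 / 2) ≤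
        -(1 / (D : ℝ)) * Real.log
          (((Measure.pi fun _ : Fin D => gaussianReal 0 (D : NNReal)⁻¹)
            {θ | Real.sqrt (∑ i, θ i ^ 2) ≤ z}).toReal) := by
  refine ⟨1, fun D hD z ⟨hz0, hza⟩ => ?_⟩
  have hz1 : z < 1 := by linarith [ha.1]
  have hD0 : (0 : ℝ) < D := by exact_mod_cast hD
  have hrate := (div_le_iff₀' hD0).2
    (log_measureReal_sqrt_sum_sq_le_le (Nat.one_le_iff_ne_zero.1 hD) hz0 hz1)
  rw [← measureReal_def, neg_mul, one_div_mul_eq_div (D : ℝ)]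
  linarith [log_le_sq_sub_one_div_two hz0]
end

section
/- In the setting where $Y_i = \varepsilon_i$ ($\varepsilon_i$ i.i.d. standard Gaussian, independent of i.i.d. $X_i$ with $\mathbb{E} g^2(X_1)=1$, $g$ bounded), let $\ell_N(\theta) = -\frac{w(\|\theta\|)}{2}\sum_{i=1}^N g^2(X_i) - \frac{1}{2}\sum_{i=1}^N \varepsilon_i^2 + \sqrt{w(\|\theta\|)}\sum_{i=1}^N \varepsilon_i g(X_i)$ with $w$ continuous, strictly increasing on $[r_0, L]$. Then there exists $C > 0$ such that for all $N \ge 1$, with probability at least $1 - C/N - C/(N w(r_0))$, for all $r_0 \le r < s \le L$ and all $\theta_r, \theta_s$ with $\|\theta_r\| = r$, $\|\theta_s\| = s$, one has $\ell_N(\theta_s) - \ell_N(\theta_r) \le -\frac{N}{4}(w(s) - w(r))$. -/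
open MeasureTheory ProbabilityTheory

/-!
Expanding the squares,
`ℓ_N(θ_s) - ℓ_N(θ_r) = -(w s - w r)/2 · A + (√(w s) - √(w r)) · B` with `A = ∑ g(X_i)²` and
`B = ∑ ε_i g(X_i)`, so the estimate holds on the event `A ≥ 3N/4`, `B ≤ √(w r₀) N/8`.
Both conditions fail with probability `O(1/N)` resp. `O(1/(N w r₀))` by Chebyshev: `A` is a sum
of `N` independent variables in `[0, M²]` with mean `1` (Popoviciu bounds each variance by
`M⁴/4`), and `B` is a sum of `N` independent centred variables of variance `E ε² · E g(X)² = 1`.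
-/

lemma neg_half_sum_sq_sub_sub_le {ι : Type*} [Fintype ι] (e u : ι → ℝ) {n c a b : ℝ}
    (hn : 0 ≤ n) (hu : 3 * n / 4 ≤ ∑ i, u i ^ 2) (heu : ∑ i, e i * u i ≤ c * n / 8)
    (ha : 0 ≤ a) (hca : c ≤ a) (hab : a ≤ b) :
    -(1 / 2) * ∑ i, (e i - b * u i) ^ 2 - -(1 / 2) * ∑ i, (e i - a * u i) ^ 2 ≤
      -(n / 4) * (b ^ 2 - a ^ 2) := by
  have expand : ∀ t, ∑ i, (e i - t * u i) ^ 2 =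
      ∑ i, e i ^ 2 - 2 * t * ∑ i, e i * u i + t ^ 2 * ∑ i, u i ^ 2 := fun t => by
    simp only [Finset.mul_sum, ← Finset.sum_sub_distrib, ← Finset.sum_add_distrib]
    exact Finset.sum_congr rfl fun i _ => by ring
  rw [expand, expand]
  have hba : 0 ≤ b - a := sub_nonneg.2 hab
  have hsq : 0 ≤ b ^ 2 - a ^ 2 := by nlinarith
  -- the cross term is at most `(b - a) c n / 8 ≤ (b² - a²) n / 16`, since `c ≤ (a + b) / 2`
  have cross : (b - a) * ∑ i, e i * u i ≤ (b ^ 2 - a ^ 2) * n / 16 := by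
    nlinarith [mul_le_mul_of_nonneg_left heu hba, mul_nonneg hba hn]
  nlinarith [mul_le_mul_of_nonneg_left hu hsq, mul_nonneg hsq hn]

lemma neg_half_sum_sq_sub_sqrt_mul_sub_le {ι : Type*} [Fintype ι] {w : ℝ → ℝ} {r0 L : ℝ}
    (hwr0 : 0 < w r0) (hmono : MonotoneOn w (Set.Icc r0 L)) (e u : ι → ℝ) {n : ℝ} (hn : 0 ≤ n)
    (hu : 3 * n / 4 ≤ ∑ i, u i ^ 2) (heu : ∑ i, e i * u i ≤ √(w r0) * n / 8) {r s : ℝ}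
    (hr : r0 ≤ r) (hrs : r ≤ s) (hs : s ≤ L) :
    -(1 / 2) * ∑ i, (e i - √(w s) * u i) ^ 2 - -(1 / 2) * ∑ i, (e i - √(w r) * u i) ^ 2 ≤
      -(n / 4) * (w s - w r) := by
  have hrL : r ∈ Set.Icc r0 L := ⟨hr, hrs.trans hs⟩
  have hwr : w r0 ≤ w r := hmono ⟨le_rfl, hr.trans hrL.2⟩ hrL hr
  have hwrs : w r ≤ w s := hmono hrL ⟨hr.trans hrs, hs⟩ hrs
  have := neg_half_sum_sq_sub_sub_le e u hn hu heu (Real.sqrt_nonneg _)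
    (Real.sqrt_le_sqrt hwr) (Real.sqrt_le_sqrt hwrs)
  rwa [Real.sq_sqrt (by linarith), Real.sq_sqrt (by linarith)] at this

namespace ProbabilityTheory

variable {Ω : Type*} {mΩ : MeasurableSpace Ω} {P : Measure Ω}

lemma IndepFun.integral_mul_sq {ε Y : Ω → ℝ} (h : IndepFun ε Y P)
    (hε : AEMeasurable ε P) (hY : AEMeasurable Y P) :
    ∫ ω, (ε ω * Y ω) ^ 2 ∂P = (∫ ω, ε ω ^ 2 ∂P) * ∫ ω, Y ω ^ 2 ∂P := by
  have hsq := h.comp (measurable_id.pow_const 2) (measurable_id.pow_const 2)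
  simp_rw [mul_pow]
  exact hsq.integral_mul_eq_mul_integral (hε.pow_const 2).aestronglyMeasurable
    (hY.pow_const 2).aestronglyMeasurable

variable [IsProbabilityMeasure P]

theorem meas_ge_abs_sum_sub_integral_le {ι : Type*} [Fintype ι] {Y : ι → Ω → ℝ}
    (hY : ∀ i, MemLp (Y i) 2 P) (hindep : Pairwise fun i j => IndepFun (Y i) (Y j) P)
    {V δ : ℝ} (hV : ∀ i, variance (Y i) P ≤ V) (hδ : 0 < δ) :
    P {ω | δ ≤ |∑ i, Y i ω - ∑ i, P[Y i]|} ≤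
      ENNReal.ofReal (Fintype.card ι * V / δ ^ 2) := by
  have hsum : MemLp (∑ i, Y i) 2 P := memLp_finsetSum' _ fun i _ => hY i
  have hvar : variance (∑ i, Y i) P ≤ Fintype.card ι * V := by
    rw [IndepFun.variance_sum (fun i _ => hY i) fun i _ j _ hij => hindep hij]
    simpa using Finset.sum_le_sum fun i (_ : i ∈ Finset.univ) => hV i
  have hint : P[∑ i, Y i] = ∑ i, P[Y i] := by
    simp only [Finset.sum_apply]
    exact integral_finsetSum _ fun i _ => (hY i).integrable one_le_two
  calc P {ω | δ ≤ |∑ i, Y i ω - ∑ i, P[Y i]|}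
      = P {ω | δ ≤ |(∑ i, Y i) ω - P[∑ i, Y i]|} := by
        rw [hint]; simp only [Finset.sum_apply]
    _ ≤ ENNReal.ofReal (variance (∑ i, Y i) P / δ ^ 2) := meas_ge_le_variance_div_sq hsum hδ
    _ ≤ _ := ENNReal.ofReal_le_ofReal (by gcongr)

lemma HasLaw.standardGaussian_moments {ε : Ω → ℝ} (hε : HasLaw ε (gaussianReal 0 1) P) :
    MemLp ε 2 P ∧ P[ε] = 0 ∧ ∫ ω, ε ω ^ 2 ∂P = 1 := by
  have hL : MemLp ε 2 P := by
    have := memLp_id_gaussianReal (μ := 0) (v := 1) 2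
    rw [← hε.map_eq, memLp_map_measure_iff aestronglyMeasurable_id hε.aemeasurable] at this
    exact this
  have hmean : P[ε] = 0 := hε.integral_eq.trans integral_id_gaussianReal
  refine ⟨hL, hmean, ?_⟩
  have := variance_eq_sub hL
  rw [hε.variance_eq, variance_id_gaussianReal, hmean] at this
  norm_num at this
  exact this.symm

lemma ofReal_one_sub_sub_le_measure {s t u : Set Ω} (h : (t ∪ u)ᶜ ⊆ s) {a b : ℝ}
    (ha : 0 ≤ a) (hb : 0 ≤ b) (hta : P t ≤ ENNReal.ofReal a)
    (hub : P u ≤ ENNReal.ofReal b) :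
    ENNReal.ofReal (1 - a - b) ≤ P s := by
  rw [ENNReal.ofReal_le_iff_le_toReal (measure_ne_top P s)]
  have hcover : P.real Set.univ ≤ P.real s + (P.real t + P.real u) := by
    have : Set.univ ⊆ s ∪ (t ∪ u) := fun x _ => by
      by_cases hx : x ∈ t ∪ u
      exacts [Or.inr hx, Or.inl (h hx)]
    refine (measureReal_mono this).trans ((measureReal_union_le _ _).trans ?_)
    gcongr
    exact measureReal_union_le _ _
  have := ENNReal.toReal_le_of_le_ofReal ha hta
  have := ENNReal.toReal_le_of_le_ofReal hb hub
  simp only [probReal_univ] at hcover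
  simp only [measureReal_def] at *
  linarith

variable {ι : Type*} [Fintype ι] {Z : ι → Ω → ℝ} {M : ℝ}

lemma meas_ge_abs_sum_sq_sub_card_le (hZm : ∀ i, Measurable (Z i))
    (hindep : Pairwise fun i j => IndepFun (Z i) (Z j) P) (hM : ∀ i ω, |Z i ω| ≤ M)
    (hZ2 : ∀ i, ∫ ω, Z i ω ^ 2 ∂P = 1) (hι : 0 < Fintype.card ι) :
    P {ω | (Fintype.card ι : ℝ) / 4 ≤ |∑ i, Z i ω ^ 2 - Fintype.card ι|} ≤
      ENNReal.ofReal (4 * M ^ 4 / Fintype.card ι) := by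
  have hbd : ∀ i ω, Z i ω ^ 2 ∈ Set.Icc 0 (M ^ 2) := fun i ω =>
    ⟨sq_nonneg _, sq_le_sq' (abs_le.1 (hM i ω)).1 (abs_le.1 (hM i ω)).2⟩
  have hL : ∀ i, MemLp (Z i ^ 2) 2 P := fun i =>
    MemLp.of_bound ((hZm i).pow_const 2).aestronglyMeasurable (M ^ 2) <| .of_forall fun ω => by
      simpa [abs_of_nonneg (sq_nonneg (Z i ω))] using (hbd i ω).2
  have hvar : ∀ i, variance (Z i ^ 2) P ≤ M ^ 4 / 4 := fun i => by
    refine (variance_le_sq_of_bounded (.of_forall (hbd i)) ?_).trans_eq (by ring)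
    exact ((hZm i).pow_const 2).aemeasurable
  have := meas_ge_abs_sum_sub_integral_le hL
    (fun i j hij => by
      exact (hindep hij).comp (measurable_id.pow_const 2) (measurable_id.pow_const 2))
    hvar (by positivity : (0 : ℝ) < Fintype.card ι / 4)
  simp only [Pi.pow_apply, hZ2, Finset.sum_const, Finset.card_univ, nsmul_eq_mul, mul_one]
    at this
  refine this.trans_eq (congrArg ENNReal.ofReal ?_)
  field_simp

lemma meas_ge_abs_sum_gaussian_mul_le {ε : ι → Ω → ℝ} (hZm : ∀ i, Measurable (Z i))
    (hεlaw : ∀ i, HasLaw (ε i) (gaussianReal 0 1) P)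
    (hindep : Pairwise fun i j => IndepFun (ε i * Z i) (ε j * Z j) P)
    (hεZ : ∀ i, IndepFun (ε i) (Z i) P) (hM : ∀ i ω, |Z i ω| ≤ M)
    (hZ2 : ∀ i, ∫ ω, Z i ω ^ 2 ∂P = 1) {δ : ℝ} (hδ : 0 < δ) :
    P {ω | δ ≤ |∑ i, ε i ω * Z i ω|} ≤ ENNReal.ofReal (Fintype.card ι / δ ^ 2) := by
  have hmom := fun i => (hεlaw i).standardGaussian_moments
  have hL : ∀ i, MemLp (ε i * Z i) 2 P := fun i =>
    (memLp_top_of_bound (hZm i).aestronglyMeasurable M (.of_forall (hM i))).mul (hmom i).1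
  have hmean : ∀ i, ∫ ω, ε i ω * Z i ω ∂P = 0 := fun i => by
    rw [(hεZ i).integral_fun_mul_eq_mul_integral (hmom i).1.aestronglyMeasurable
      (hZm i).aestronglyMeasurable, (hmom i).2.1, zero_mul]
  have hvar : ∀ i, variance (ε i * Z i) P ≤ 1 := fun i => by
    refine (variance_le_expectation_sq (hL i).aestronglyMeasurable).trans_eq ?_
    simp only [Pi.pow_apply, Pi.mul_apply]
    rw [(hεZ i).integral_mul_sq (hεlaw i).aemeasurable (hZm i).aemeasurable, (hmom i).2.2,
      hZ2 i, one_mul]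
  have := meas_ge_abs_sum_sub_integral_le hL hindep hvar hδ
  simpa only [Pi.mul_apply, hmean, Finset.sum_const_zero, sub_zero, mul_one] using this

end ProbabilityTheory

theorem stmt_10_general {α : Type*} [MeasurableSpace α] (g : α → ℝ) (hgm : Measurable g)
    (gmin gmax : ℝ) (hgbd : ∀ x, g x ∈ Set.Icc gmin gmax)
    (w : ℝ → ℝ)
    (r0 L : ℝ) (hwr0 : 0 < w r0)
    (hmono : StrictMonoOn w (Set.Icc r0 L)) (D : ℕ) :
    ∃ C : ℝ, 0 < C ∧ ∀ N : ℕ, 1 ≤ N →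
      ∀ (Ω : Type) (_ : MeasurableSpace Ω) (P : Measure Ω), IsProbabilityMeasure P →
      ∀ (X : Fin N → Ω → α) (ε : Fin N → Ω → ℝ),
        (∀ i, Measurable (X i)) → (∀ i, Measurable (ε i)) →
        iIndepFun (fun i ω => (X i ω, ε i ω)) P →
        (∀ i j, IdentDistrib (X i) (X j) P P) →
        (∀ i, Measure.map (ε i) P = gaussianReal 0 1) →
        (∀ i, IndepFun (X i) (ε i) P) →
        (∀ i, ∫ ω, g (X i ω) ^ 2 ∂P = 1) →
        ENNReal.ofReal (1 - C / N - C / (N * w r0)) ≤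
          P {ω | ∀ θr θs : EuclideanSpace ℝ (Fin D),
            r0 ≤ ‖θr‖ → ‖θr‖ < ‖θs‖ → ‖θs‖ ≤ L →
            (-(1 / 2) * ∑ i, (ε i ω - Real.sqrt (w ‖θs‖) * g (X i ω)) ^ 2) -
              (-(1 / 2) * ∑ i, (ε i ω - Real.sqrt (w ‖θr‖) * g (X i ω)) ^ 2) ≤
              -((N : ℝ) / 4) * (w ‖θs‖ - w ‖θr‖)} := by
  set M := max |gmin| |gmax|
  have hgM : ∀ x, |g x| ≤ M := fun x => abs_le_max_abs_abs (hgbd x).1 (hgbd x).2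
  refine ⟨4 * M ^ 4 + 64, by positivity, ?_⟩
  intro N hN Ω _ P _ X ε hXm hεm hindep _ hεlaw hXε hg2
  have hNpos : (0 : ℝ) < N := by exact_mod_cast hN
  have hA := meas_ge_abs_sum_sq_sub_card_le (Z := fun i ω => g (X i ω)) (M := M)
    (fun i => hgm.comp (hXm i))
    (fun i j hij => (hindep.comp (fun _ p => g p.1) fun _ => hgm.comp measurable_fst).indepFun hij)
    (fun i ω => hgM _) hg2 (by rw [Fintype.card_fin]; exact hN)
  have hB := meas_ge_abs_sum_gaussian_mul_le (Z := fun i ω => g (X i ω)) (M := M)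
    (fun i => hgm.comp (hXm i)) (fun i => ⟨(hεm i).aemeasurable, hεlaw i⟩)
    (fun i j hij => (hindep.comp (fun _ p => p.2 * g p.1)
      fun _ => measurable_snd.mul (hgm.comp measurable_fst)).indepFun hij)
    (fun i => (hXε i).symm.comp measurable_id hgm) (fun i ω => hgM _) hg2
    (by positivity : 0 < √(w r0) * N / 8)
  simp only [Fintype.card_fin] at hA hB
  refine ofReal_one_sub_sub_le_measure ?_ (by positivity) (by positivity)
    (hA.trans (ENNReal.ofReal_le_ofReal ?_)) (hB.trans (ENNReal.ofReal_le_ofReal ?_))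
  · intro ω hω θr θs hr hrs hs
    simp only [Set.mem_compl_iff, Set.mem_union, Set.mem_ofPred_eq, not_or, not_le] at hω
    exact neg_half_sum_sq_sub_sqrt_mul_sub_le hwr0 hmono.monotoneOn _ _ hNpos.le
      (by linarith [(abs_lt.1 hω.1).1]) (abs_lt.1 hω.2).2.le hr hrs.le hs
  · gcongr
    linarith
  · rw [div_pow, mul_pow, Real.sq_sqrt hwr0.le]
    field_simp
    norm_num
    positivity

/-- With probability at least `1 - C/N - C/(N w(r₀))`, the log-likelihood
`ℓ_N(θ) = -½ ∑ᵢ (ε_i - √(w(‖θ‖)) g(X_i))²` is uniformly "monotone decreasing in `‖θ‖`":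
for all `r₀ ≤ ‖θ_r‖ < ‖θ_s‖ ≤ L`, `ℓ_N(θ_s) - ℓ_N(θ_r) ≤ -(N/4)(w(‖θ_s‖) - w(‖θ_r‖))`. -/
theorem stmt_10 {α : Type*} [MeasurableSpace α] (g : α → ℝ) (hgm : Measurable g)
    (gmin gmax : ℝ) (hgmin : 0 < gmin) (hgbd : ∀ x, g x ∈ Set.Icc gmin gmax)
    (w : ℝ → ℝ) (hwc : Continuous w) (hwnn : ∀ r, 0 ≤ w r)
    (r0 L : ℝ) (hr0 : 0 < r0) (hr0L : r0 < L) (hwr0 : 0 < w r0)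
    (hmono : StrictMonoOn w (Set.Icc r0 L)) (D : ℕ) :
    ∃ C : ℝ, 0 < C ∧ ∀ N : ℕ, 1 ≤ N →
      ∀ (Ω : Type) (_ : MeasurableSpace Ω) (P : Measure Ω), IsProbabilityMeasure P →
      ∀ (X : Fin N → Ω → α) (ε : Fin N → Ω → ℝ),
        (∀ i, Measurable (X i)) → (∀ i, Measurable (ε i)) →
        iIndepFun (fun i ω => (X i ω, ε i ω)) P →
        (∀ i j, IdentDistrib (X i) (X j) P P) →
        (∀ i, Measure.map (ε i) P = gaussianReal 0 1) →
        (∀ i, IndepFun (X i) (ε i) P) →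
        (∀ i, ∫ ω, g (X i ω) ^ 2 ∂P = 1) →
        ENNReal.ofReal (1 - C / N - C / (N * w r0)) ≤
          P {ω | ∀ θr θs : EuclideanSpace ℝ (Fin D),
            r0 ≤ ‖θr‖ → ‖θr‖ < ‖θs‖ → ‖θs‖ ≤ L →
            (-(1 / 2) * ∑ i, (ε i ω - Real.sqrt (w ‖θs‖) * g (X i ω)) ^ 2) -
              (-(1 / 2) * ∑ i, (ε i ω - Real.sqrt (w ‖θr‖) * g (X i ω)) ^ 2) ≤
              -((N : ℝ) / 4) * (w ‖θs‖ - w ‖θr‖)} :=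
  stmt_10_general g hgm gmin gmax hgbd w r0 L hwr0 hmono D
end

section
/- Let $\mu$ be a probability measure on $\mathbb{R}^D$, and suppose disjoint measurable sets $S$ (start), $W$ (well), $T$ (target), and the escape set $B_L^c$ satisfy $\mu(W)/\mu(S) \le e^{-\nu N}$ and $\mu(B_L^c)/\mu(S) \le e^{-\nu N}$ for some $\nu \ge 1$, $N \ge 1$. Let $(\vartheta_k)$ be a Markov chain with invariant measure $\mu$, started from $\mu(\cdot \mid S)$, whose one-step displacement exceeds $\eta/2$ from any state in $B_L$ with probability at most $e^{-c_0 N}$, and suppose that, whenever all steps up to time $k$ have size $< \eta/2$ and the chain remains in $B_L$, any path from $S$ to $T$ must pass through $W$. Then $\Pr(\tau_T \le e^{(1 \wedge c_0) N/2}) \le 3 e^{-(1 \wedge c_0) N / 2}$. -/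
open MeasureTheory ProbabilityTheory

/-!
Since `μ` is invariant for `κ` and the chain starts from `μ(· | S) ≤ μ / μ(S)`, the law of every
`ϑ k` is dominated by `μ / μ(S)`. Hence at any fixed time the chain is in `W`, or outside `B_L`,
with probability at most `e^{-νN}`, and a step of size `≥ η/2` taken from `B_L` has probability at
most `e^{-c₀N}`. A path from `S` reaching `T` by time `K` must take one of these bad steps before
`K`, so a union bound over the `⌊K⌋` steps, with `K = e^{(1 ∧ c₀)N/2}`, gives the estimate.
-/

lemma MeasureTheory.Measure.comp_mono_s17 {α β : Type*} [MeasurableSpace α] [MeasurableSpace β]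
    (κ : Kernel α β) {ν ν' : Measure α} (h : ν ≤ ν') : κ ∘ₘ ν ≤ κ ∘ₘ ν' := by
  rw [Measure.le_iff]
  intro s hs
  simp only [Measure.bind_apply hs κ.aemeasurable]
  exact lintegral_mono' h le_rfl

lemma ProbabilityTheory.cond_le_inv_smul_s17 {α : Type*} [MeasurableSpace α] (μ : Measure α)
    (s : Set α) : μ[|s] ≤ (μ s)⁻¹ • μ :=
  fun t => mul_le_mul_right (Measure.restrict_le_self t) _

section MarkovChain

variable {α Ω : Type*} [MeasurableSpace α] [MeasurableSpace Ω] {P : Measure Ω}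
  {X : ℕ → Ω → α} {κ : Kernel α α}

lemma map_succ_eq_comp [IsFiniteMeasure P] [IsSFiniteKernel κ] (hX : ∀ k, Measurable (X k))
    (hjoint : ∀ k, P.map (fun ω => (X k ω, X (k + 1) ω)) = P.map (X k) ⊗ₘ κ) (k : ℕ) :
    P.map (X (k + 1)) = κ ∘ₘ P.map (X k) := by
  rw [← Measure.snd_map_prodMk (hX k), hjoint k, Measure.snd_compProd]

lemma map_le_smul_of_comp_eq_self [IsFiniteMeasure P] [IsSFiniteKernel κ]
    (hX : ∀ k, Measurable (X k))
    (hjoint : ∀ k, P.map (fun ω => (X k ω, X (k + 1) ω)) = P.map (X k) ⊗ₘ κ)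
    {μ : Measure α} (hinv : κ ∘ₘ μ = μ) {c : ENNReal} (h0 : P.map (X 0) ≤ c • μ) :
    ∀ k, P.map (X k) ≤ c • μ
  | 0 => h0
  | k + 1 => by
    rw [map_succ_eq_comp hX hjoint k]
    calc κ ∘ₘ P.map (X k) ≤ κ ∘ₘ (c • μ) :=
          Measure.comp_mono_s17 κ (map_le_smul_of_comp_eq_self hX hjoint hinv h0 k)
      _ = c • μ := by rw [Measure.comp_smul, hinv]

end MarkovChain

lemma measure_preimage_le_div_of_map_le {α Ω : Type*} [MeasurableSpace α] [MeasurableSpace Ω]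
    {P : Measure Ω} {X : Ω → α} (hX : Measurable X) {μ : Measure α} {c : ENNReal}
    (h : P.map X ≤ c⁻¹ • μ) (A : Set α) : P (X ⁻¹' A) ≤ μ A / c :=
  calc P (X ⁻¹' A) ≤ P.map X A := Measure.le_map_apply hX.aemeasurable A
    _ ≤ c⁻¹ * μ A := h A
    _ = μ A / c := by rw [mul_comm, div_eq_mul_inv]

lemma measure_pair_mem_le_of_map_eq_compProd {α β Ω : Type*} [MeasurableSpace α]
    [MeasurableSpace β] [MeasurableSpace Ω] {P : Measure Ω} [IsProbabilityMeasure P]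
    {X : Ω → α} {Y : Ω → β} (hX : Measurable X) (hY : Measurable Y) {κ : Kernel α β}
    [IsSFiniteKernel κ] (hjoint : P.map (fun ω => (X ω, Y ω)) = P.map X ⊗ₘ κ)
    {s : Set (α × β)} (hs : MeasurableSet s) {ε : ENNReal}
    (hε : ∀ x, κ x (Prod.mk x ⁻¹' s) ≤ ε) : P {ω | (X ω, Y ω) ∈ s} ≤ ε := by
  have := Measure.isProbabilityMeasure_map (μ := P) hX.aemeasurable
  calc P {ω | (X ω, Y ω) ∈ s} = (P.map X ⊗ₘ κ) s := by
        rw [← hjoint, Measure.map_apply (hX.prodMk hY) hs]; rfl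
    _ = ∫⁻ x, κ x (Prod.mk x ⁻¹' s) ∂P.map X := Measure.compProd_apply hs
    _ ≤ ∫⁻ _, ε ∂P.map X := lintegral_mono hε
    _ = ε := by rw [lintegral_const, measure_univ, mul_one]

section Confinement

variable {E : Type*} [SeminormedAddCommGroup E]

def IsEscapeStep (W : Set E) (L η : ℝ) (x y : E) : Prop :=
  y ∈ W ∨ L < ‖y‖ ∨ (‖x‖ ≤ L ∧ η / 2 ≤ ‖y - x‖)

lemma exists_isEscapeStep_of_mem {S W T : Set E} {L η : ℝ} {x : ℕ → E}
    (hSW : Disjoint S W) (hSL : S ⊆ {θ | ‖θ‖ ≤ L})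
    (hpath : ∀ k : ℕ, x 0 ∈ S → (∀ j < k, ‖x (j + 1) - x j‖ < η / 2) →
      (∀ j ≤ k, ‖x j‖ ≤ L) → x k ∈ T → ∃ j ≤ k, x j ∈ W)
    {k n : ℕ} (hkn : k ≤ n) (h0 : x 0 ∈ S) (hk : x k ∈ T) :
    ∃ j < n, IsEscapeStep W L η (x j) (x (j + 1)) := by
  by_contra! hsafe
  simp only [IsEscapeStep, not_or, not_and, not_le, not_lt] at hsafe
  have hball : ∀ j ≤ k, ‖x j‖ ≤ L
    | 0, _ => hSL h0
    | j + 1, hj => (hsafe j (by omega)).2.1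
  obtain ⟨j, hjk, hjW⟩ := hpath k h0 (fun j hj => (hsafe j (by omega)).2.2 (hball j hj.le))
    hball hk
  cases j with
  | zero => exact hSW.ne_of_mem h0 hjW rfl
  | succ j => exact (hsafe j (by omega)).1 hjW

end Confinement

lemma measure_isEscapeStep_le {E Ω : Type*} [NormedAddCommGroup E] [MeasurableSpace E]
    [BorelSpace E] [SecondCountableTopology E] [MeasurableSpace Ω] {P : Measure Ω}
    [IsProbabilityMeasure P] {X Y : Ω → E} (hX : Measurable X) (hY : Measurable Y)
    {κ : Kernel E E} [IsSFiniteKernel κ] (hjoint : P.map (fun ω => (X ω, Y ω)) = P.map X ⊗ₘ κ)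
    {μ : Measure E} {c : ENNReal} (hYμ : P.map Y ≤ c⁻¹ • μ) {W : Set E} {L η : ℝ}
    {δ ε : ENNReal} (hW : μ W / c ≤ δ) (hBL : μ {θ | L < ‖θ‖} / c ≤ δ)
    (hstep : ∀ θ : E, ‖θ‖ ≤ L → κ θ {v | η / 2 ≤ ‖θ - v‖} ≤ ε) :
    P {ω | IsEscapeStep W L η (X ω) (Y ω)} ≤ δ + δ + ε := by
  set jump : Set (E × E) := {p | ‖p.1‖ ≤ L ∧ η / 2 ≤ ‖p.1 - p.2‖}
  have hjump : MeasurableSet jump :=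
    (measurableSet_le measurable_fst.norm measurable_const).inter
      (measurableSet_le measurable_const (measurable_fst.sub measurable_snd).norm)
  have hslice (θ : E) : κ θ (Prod.mk θ ⁻¹' jump) ≤ ε := by
    by_cases hθ : ‖θ‖ ≤ L
    · exact (measure_mono fun v hv => hv.2).trans (hstep θ hθ)
    · simp [jump, hθ]
  have hsub : {ω | IsEscapeStep W L η (X ω) (Y ω)} ⊆
      Y ⁻¹' W ∪ Y ⁻¹' {θ | L < ‖θ‖} ∪ {ω | (X ω, Y ω) ∈ jump} := by
    rintro ω (h | h | ⟨hX, hjump⟩)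
    · exact .inl (.inl h)
    · exact .inl (.inr h)
    · exact .inr ⟨hX, by rwa [norm_sub_rev]⟩
  calc P {ω | IsEscapeStep W L η (X ω) (Y ω)}
      ≤ P (Y ⁻¹' W) + P (Y ⁻¹' {θ | L < ‖θ‖}) + P {ω | (X ω, Y ω) ∈ jump} :=
        (measure_mono hsub).trans <|
          (measure_union_le _ _).trans (add_le_add (measure_union_le _ _) le_rfl)
    _ ≤ δ + δ + ε := by
        gcongr
        · exact (measure_preimage_le_div_of_map_le hY hYμ W).trans hW
        · exact (measure_preimage_le_div_of_map_le hY hYμ _).trans hBL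
        · exact measure_pair_mem_le_of_map_eq_compProd hX hY hjoint hjump hslice

lemma natFloor_exp_mul_le {a b c x : ℝ} (hab : a ≤ b) (hac : a ≤ c) (hx : 0 ≤ x) :
    (⌊Real.exp (a * x / 2)⌋₊ : ℝ) * (2 * Real.exp (-b * x) + Real.exp (-c * x)) ≤
      3 * Real.exp (-a * x / 2) := by
  have key (d : ℝ) (had : a ≤ d) :
      Real.exp (a * x / 2) * Real.exp (-d * x) ≤ Real.exp (-a * x / 2) := by
    rw [← Real.exp_add]
    exact Real.exp_le_exp.2 (by nlinarith)
  calc (⌊Real.exp (a * x / 2)⌋₊ : ℝ) * (2 * Real.exp (-b * x) + Real.exp (-c * x))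
      ≤ Real.exp (a * x / 2) * (2 * Real.exp (-b * x) + Real.exp (-c * x)) := by
        gcongr
        exact Nat.floor_le (Real.exp_pos _).le
    _ ≤ 3 * Real.exp (-a * x / 2) := by
        nlinarith [key b hab, key c hac]

theorem stmt_17_general (D : ℕ) (μ : Measure (EuclideanSpace ℝ (Fin D)))
    (S W T : Set (EuclideanSpace ℝ (Fin D)))
    (hSm : MeasurableSet S) (hSW : Disjoint S W)
    (L η ν c0 : ℝ) (hν : 1 ≤ ν) (N : ℕ)
    (hSL : S ⊆ {θ | ‖θ‖ ≤ L})
    (hW : μ W / μ S ≤ ENNReal.ofReal (Real.exp (-ν * N)))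
    (hBL : μ {θ | L < ‖θ‖} / μ S ≤ ENNReal.ofReal (Real.exp (-ν * N)))
    {Ω : Type*} [MeasurableSpace Ω] (P : Measure Ω) [IsProbabilityMeasure P]
    (ϑ : ℕ → Ω → EuclideanSpace ℝ (Fin D)) (hϑ : ∀ k, Measurable (ϑ k))
    (κ : Kernel (EuclideanSpace ℝ (Fin D)) (EuclideanSpace ℝ (Fin D))) [IsMarkovKernel κ]
    (hinv : μ.bind (fun x => κ x) = μ)
    (hinit : Measure.map (ϑ 0) P = ProbabilityTheory.cond μ S)
    (hjoint : ∀ k, Measure.map (fun ω => (ϑ k ω, ϑ (k + 1) ω)) P =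
      (Measure.map (ϑ k) P).compProd κ)
    (hstep : ∀ θ : EuclideanSpace ℝ (Fin D), ‖θ‖ ≤ L →
      κ θ {v | η / 2 ≤ ‖θ - v‖} ≤ ENNReal.ofReal (Real.exp (-c0 * N)))
    (hpath : ∀ ω, ∀ k : ℕ, ϑ 0 ω ∈ S →
      (∀ j < k, ‖ϑ (j + 1) ω - ϑ j ω‖ < η / 2) →
      (∀ j ≤ k, ‖ϑ j ω‖ ≤ L) →
      ϑ k ω ∈ T → ∃ j ≤ k, ϑ j ω ∈ W) :
    P {ω | ∃ k : ℕ, (k : ℝ) ≤ Real.exp (min 1 c0 * N / 2) ∧ ϑ k ω ∈ T} ≤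
      ENNReal.ofReal (3 * Real.exp (-(min 1 c0) * N / 2)) := by
  set m := min 1 c0
  set n := ⌊Real.exp (m * N / 2)⌋₊
  set escape := fun j => {ω | IsEscapeStep W L η (ϑ j ω) (ϑ (j + 1) ω)}
  have hmarg : ∀ k, P.map (ϑ k) ≤ (μ S)⁻¹ • μ :=
    map_le_smul_of_comp_eq_self hϑ hjoint hinv (hinit ▸ cond_le_inv_smul_s17 μ S)
  have hstart : P {ω | ϑ 0 ω ∉ S} = 0 := by
    change P (ϑ 0 ⁻¹' Sᶜ) = 0
    rw [← Measure.map_apply (hϑ 0) hSm.compl, hinit, cond_apply hSm, Set.inter_compl_self,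
      measure_empty, mul_zero]
  have hsub : {ω | ∃ k : ℕ, (k : ℝ) ≤ Real.exp (m * N / 2) ∧ ϑ k ω ∈ T} ⊆
      {ω | ϑ 0 ω ∉ S} ∪ ⋃ j ∈ Finset.range n, escape j := by
    rintro ω ⟨k, hk, hkT⟩
    by_cases h0 : ϑ 0 ω ∈ S
    · simpa [escape] using .inr <|
        exists_isEscapeStep_of_mem hSW hSL (hpath ω) (Nat.le_floor hk) h0 hkT
    · exact .inl h0
  calc P {ω | ∃ k : ℕ, (k : ℝ) ≤ Real.exp (m * N / 2) ∧ ϑ k ω ∈ T}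
      ≤ P {ω | ϑ 0 ω ∉ S} + ∑ j ∈ Finset.range n, P (escape j) :=
        (measure_mono hsub).trans <|
          (measure_union_le _ _).trans (add_le_add le_rfl (measure_biUnion_finset_le _ _))
    _ ≤ n * (ENNReal.ofReal (Real.exp (-ν * N)) + ENNReal.ofReal (Real.exp (-ν * N)) +
          ENNReal.ofReal (Real.exp (-c0 * N))) := by
        rw [hstart, zero_add]
        refine (Finset.sum_le_card_nsmul _ _ _ fun j _ => ?_).trans_eq
          (by rw [Finset.card_range, nsmul_eq_mul])
        exact measure_isEscapeStep_le (hϑ j) (hϑ (j + 1)) (hjoint j) (hmarg (j + 1)) hW hBL hstep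
    _ = ENNReal.ofReal (n * (2 * Real.exp (-ν * N) + Real.exp (-c0 * N))) := by
        rw [ENNReal.ofReal_mul n.cast_nonneg, ENNReal.ofReal_natCast, two_mul,
          ENNReal.ofReal_add (by positivity) (by positivity),
          ENNReal.ofReal_add (by positivity) (by positivity)]
    _ ≤ ENNReal.ofReal (3 * Real.exp (-m * N / 2)) :=
        ENNReal.ofReal_le_ofReal <|
          natFloor_exp_mul_le ((min_le_left 1 c0).trans hν) (min_le_right 1 c0) N.cast_nonneg

/-- Exponential hitting-time lower bound for the target region: under the bottleneck
bounds `μ(W)/μ(S) ≤ e^{-νN}`, `μ(B_L^c)/μ(S) ≤ e^{-νN}` (`ν ≥ 1`), the small-step bound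
on `B_L`, initialisation from `μ(·|S)`, and the geometric condition that small-step paths
from `S` to `T` staying in `B_L` must pass through `W`, one has
`Pr(τ_T ≤ e^{(1∧c₀)N/2}) ≤ 3 e^{-(1∧c₀)N/2}`. -/
theorem stmt_17 (D : ℕ) (μ : Measure (EuclideanSpace ℝ (Fin D))) [IsProbabilityMeasure μ]
    (S W T : Set (EuclideanSpace ℝ (Fin D)))
    (hSm : MeasurableSet S) (hWm : MeasurableSet W) (hTm : MeasurableSet T)
    (hSW : Disjoint S W) (hST : Disjoint S T) (hWT : Disjoint W T)
    (L η ν c0 : ℝ) (hL : 0 < L) (hη : 0 < η) (hν : 1 ≤ ν) (hc0 : 0 < c0)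
    (N : ℕ) (hN : 1 ≤ N)
    (hμS : 0 < μ S) (hSL : S ⊆ {θ | ‖θ‖ ≤ L})
    (hW : μ W / μ S ≤ ENNReal.ofReal (Real.exp (-ν * N)))
    (hBL : μ {θ | L < ‖θ‖} / μ S ≤ ENNReal.ofReal (Real.exp (-ν * N)))
    {Ω : Type*} [MeasurableSpace Ω] (P : Measure Ω) [IsProbabilityMeasure P]
    (ϑ : ℕ → Ω → EuclideanSpace ℝ (Fin D)) (hϑ : ∀ k, Measurable (ϑ k))
    (κ : Kernel (EuclideanSpace ℝ (Fin D)) (EuclideanSpace ℝ (Fin D))) [IsMarkovKernel κ]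
    (hinv : μ.bind (fun x => κ x) = μ)
    (hinit : Measure.map (ϑ 0) P = ProbabilityTheory.cond μ S)
    (hjoint : ∀ k, Measure.map (fun ω => (ϑ k ω, ϑ (k + 1) ω)) P =
      (Measure.map (ϑ k) P).compProd κ)
    (hstep : ∀ θ : EuclideanSpace ℝ (Fin D), ‖θ‖ ≤ L →
      κ θ {v | η / 2 ≤ ‖θ - v‖} ≤ ENNReal.ofReal (Real.exp (-c0 * N)))
    (hpath : ∀ ω, ∀ k : ℕ, ϑ 0 ω ∈ S →
      (∀ j < k, ‖ϑ (j + 1) ω - ϑ j ω‖ < η / 2) →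
      (∀ j ≤ k, ‖ϑ j ω‖ ≤ L) →
      ϑ k ω ∈ T → ∃ j ≤ k, ϑ j ω ∈ W) :
    P {ω | ∃ k : ℕ, (k : ℝ) ≤ Real.exp (min 1 c0 * N / 2) ∧ ϑ k ω ∈ T} ≤
      ENNReal.ofReal (3 * Real.exp (-(min 1 c0) * N / 2)) :=
  stmt_17_general D μ S W T hSm hSW L η ν c0 hν N hSL hW hBL P ϑ hϑ κ hinv hinit hjoint hstep hpath
end
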